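/- The GNO semantics is correctly captured by the program transformation t: if S is a GNO-preferred answer set of (P,<), then A = S ∪ {n_r : r ∈ Γ_S(P)} ∪ Aux(S) is an answer set of t(P,<); conversely, if A is an answer set of t(P,<), then S = A ∩ Lit is a GNO-preferred answer set of (P,<) and A = S ∪ {n_r : r ∈ Γ_S(P)} ∪ Aux(S). -/

import Mathlib

/-- A literal over atoms `A`: `(true, a)` is the atom `a`, `(false, a)` is `¬ a`. -/
abbrev Lit (A : Type) := Bool × A

/-- A rule with head, positive body and negative body. -/
structure Rule (A : Type) where
  head : Lit A
  pos : Set (Lit A)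
  neg : Set (Lit A)

variable {A : Type}

/-- Heads of a set of rules. -/
def headSet (R : Set (Rule A)) : Set (Lit A) := Rule.head '' R

/-- `R ⊆ P` positively satisfies `P`. -/
def PosSat (P R : Set (Rule A)) : Prop :=
  R ⊆ P ∧ ∀ r ∈ P, r.pos ⊆ headSet R → r ∈ R

/-- The minimal set of rules positively satisfying `P`. -/
def MP (P : Set (Rule A)) : Set (Rule A) := ⋂₀ {R | PosSat P R}

/-- A set of rules defeats a rule. -/
def defeatsRule (R : Set (Rule A)) (r : Rule A) : Prop :=
  (headSet R ∩ r.neg).Nonempty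

/-- A set of rules defeats a set of rules. -/
def defeatsSet (R₁ R₂ : Set (Rule A)) : Prop := ∃ r ∈ R₂, defeatsRule R₁ r

/-- The reduct `P^R` removes each rule defeated by `R`. -/
def reduct (P R : Set (Rule A)) : Set (Rule A) := {r ∈ P | ¬ defeatsRule R r}

/-- `R ⊆ P` is a generating set of `P` iff `R = MP (P^R)`. -/
def GenSet (P R : Set (Rule A)) : Prop := R ⊆ P ∧ R = MP (reduct P R)

/-- A set of literals is consistent iff it contains no complementary pair. -/
def Consistent (S : Set (Lit A)) : Prop :=
  ∀ a : A, ¬ (((true, a) ∈ S) ∧ ((false, a) ∈ S))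

/-- Answer sets via generating sets. -/
def AnswerSet (P : Set (Rule A)) (S : Set (Lit A)) : Prop :=
  Consistent S ∧ ∃ R, GenSet P R ∧ headSet R = S

/-- `Γ_S(P)`: rules whose positive body is in `S` and negative body disjoint from `S`. -/
def Gamma (S : Set (Lit A)) (P : Set (Rule A)) : Set (Rule A) :=
  {r ∈ P | r.pos ⊆ S ∧ r.neg ∩ S = ∅}

/-- Fragments of a program. -/
def Frag (P : Set (Rule A)) : Set (Set (Rule A)) := {R | R ⊆ P ∧ MP R = R}

/-- Fragment reduct: remove fragments defeated by a member of `E`. -/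
def fragReduct (P : Set (Rule A)) (E : Set (Set (Rule A))) : Set (Set (Rule A)) :=
  {X ∈ Frag P | ¬ ∃ Y ∈ E, defeatsSet Y X}

/-- Stable fragment sets. -/
def StableFragSet (P : Set (Rule A)) (E : Set (Set (Rule A))) : Prop :=
  E ⊆ Frag P ∧ fragReduct P E = E

/-- Mutually defeating (conflicting) sets of rules. -/
def Conflicting (X Y : Set (Rule A)) : Prop := defeatsSet X Y ∧ defeatsSet Y X

/-- `X` overrides `Y` w.r.t. the preference relation `lt`. -/
def Overrides (lt : Rule A → Rule A → Prop) (X Y : Set (Rule A)) : Prop :=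
  Conflicting X Y ∧
    ∀ r₁ ∈ X, defeatsRule Y r₁ → ∃ r₂ ∈ Y, defeatsRule X r₂ ∧ lt r₂ r₁

/-- Preferred fragment reduct (semantics G). -/
def prefFragReduct (lt : Rule A → Rule A → Prop) (P : Set (Rule A))
    (E : Set (Set (Rule A))) : Set (Set (Rule A)) :=
  {X ∈ Frag P | ¬ ∃ Y ∈ E, defeatsSet Y X ∧ ¬ Overrides lt X Y}

/-- Preferred stable fragment sets (semantics G). -/
def PrefStableFragSet (lt : Rule A → Rule A → Prop) (P : Set (Rule A))
    (E : Set (Set (Rule A))) : Prop :=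
  E ⊆ Frag P ∧ prefFragReduct lt P E = E

/-- Preferred answer sets under the fragment-based semantics G. -/
def GPrefAnswerSet (lt : Rule A → Rule A → Prop) (P : Set (Rule A))
    (S : Set (Lit A)) : Prop :=
  Consistent S ∧ ∃ E, PrefStableFragSet lt P E ∧ headSet (⋃₀ E) = S

/-- `T(r,R)` for semantics GNO. -/
def Trules (lt : Rule A → Rule A → Prop) (r : Rule A) (R : Set (Rule A)) :
    Set (Rule A) :=
  MP {p ∈ R | ¬ lt p r}

/-- GNO reduct: remove rules `r` with `body⁻(r) ∩ head(T(r,R)) ≠ ∅`. -/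
def gnoReduct (lt : Rule A → Rule A → Prop) (P R : Set (Rule A)) : Set (Rule A) :=
  {r ∈ P | ¬ (r.neg ∩ headSet (Trules lt r R)).Nonempty}

/-- GNO-preferred generating sets. -/
def GNOPrefGen (lt : Rule A → Rule A → Prop) (P R : Set (Rule A)) : Prop :=
  GenSet P R ∧ R = MP (gnoReduct lt P R)

/-- GNO-preferred answer sets. -/
def GNOPrefAnswerSet (lt : Rule A → Rule A → Prop) (P : Set (Rule A))
    (S : Set (Lit A)) : Prop :=
  Consistent S ∧ ∃ R, GNOPrefGen lt P R ∧ headSet R = S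

/-- A rule defeats a rule. -/
def defeats (r₁ r₂ : Rule A) : Prop := r₁.head ∈ r₂.neg

/-- `r₁` directly overrides `r₂` w.r.t. `lt`. -/
def DirOverrides (lt : Rule A → Rule A → Prop) (r₁ r₂ : Rule A) : Prop :=
  (defeats r₁ r₂ ∧ defeats r₂ r₁) ∧ lt r₂ r₁

/-- D-reduct for the direct-conflict semantics. -/
def dReduct (lt : Rule A → Rule A → Prop) (P R : Set (Rule A)) : Set (Rule A) :=
  {r₁ ∈ P | ¬ ∃ r₂ ∈ R, defeats r₂ r₁ ∧ ¬ DirOverrides lt r₁ r₂}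

/-- D-preferred generating sets. -/
def DPrefGen (lt : Rule A → Rule A → Prop) (P R : Set (Rule A)) : Prop :=
  R = MP (dReduct lt P R)

/-- D-preferred answer sets. -/
def DPrefAnswerSet (lt : Rule A → Rule A → Prop) (P : Set (Rule A))
    (S : Set (Lit A)) : Prop :=
  Consistent S ∧ ∃ R, DPrefGen lt P R ∧ headSet R = S

/-- Stratified programs. -/
def Stratified (P : Set (Rule A)) : Prop :=
  ∃ lam : Lit A → ℕ, ∀ r ∈ P,
    (∀ l ∈ r.pos, lam l ≤ lam r.head) ∧ (∀ l ∈ r.neg, lam l < lam r.head)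

/-- Atoms of the transformed program: original atoms, a name `n_r` for each rule
`r`, a tagged copy `x^r` of each literal `x` for each rule `r`, and `inc`. -/
inductive TAtom (A : Type) where
  | orig : A → TAtom A
  | name : Rule A → TAtom A
  | tag  : Lit A → Rule A → TAtom A
  | inc  : TAtom A

/-- Embedding of the original literals. -/
def embedLit {A : Type} (l : Lit A) : Lit (TAtom A) := (l.1, TAtom.orig l.2)

/-- The literal `n_r`. -/
def nLit {A : Type} (r : Rule A) : Lit (TAtom A) := (true, TAtom.name r)

/-- The literal `x^r`. -/
def tagLit {A : Type} (x : Lit A) (r : Rule A) : Lit (TAtom A) := (true, TAtom.tag x r)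

/-- The literal `inc`. -/
def incLit {A : Type} : Lit (TAtom A) := (true, TAtom.inc)

/-- The transformation `t(P,<)`. -/
def transProg {A : Type} (lt : Rule A → Rule A → Prop) (P : Set (Rule A)) :
    Set (Rule (TAtom A)) :=
  {q | ∃ r ∈ P,
    -- (1)  head(r) ← n_r
    q = ⟨embedLit r.head, {nLit r}, ∅⟩ ∨
    -- (2)  n_r ← body⁺(r), not body⁻(r)^r
    q = ⟨nLit r, embedLit '' r.pos, (fun x => tagLit x r) '' r.neg⟩ ∨
    -- (3)  head(p)^r ← body⁺(p)^r, n_p   for each p ∈ P with ¬ (p < r)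
    (∃ p ∈ P, ¬ lt p r ∧
      q = ⟨tagLit p.head r, (fun y => tagLit y r) '' p.pos ∪ {nLit p}, ∅⟩) ∨
    -- (4)  inc ← n_r, x, not inc   for each x ∈ body⁻(r)
    (∃ x ∈ r.neg, q = ⟨incLit, {nLit r, embedLit x}, {incLit}⟩)}

/-- The literals `n_r` for `r ∈ Γ_S(P)`. -/
def nameLits {A : Type} (P : Set (Rule A)) (S : Set (Lit A)) : Set (Lit (TAtom A)) :=
  nLit '' Gamma S P

/-- `Aux(S) = ⋃_{r ∈ P} head(T(r, Γ_S(P)))^r`. -/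
def auxLits {A : Type} (lt : Rule A → Rule A → Prop) (P : Set (Rule A))
    (S : Set (Lit A)) : Set (Lit (TAtom A)) :=
  {l | ∃ r ∈ P, ∃ x ∈ headSet (Trules lt r (Gamma S P)), l = tagLit x r}

/-!
The reduct of `t(P,<)` by a set of rules `G` keeps rule (2) for `r` exactly when no tagged
literal `x^r` with `x ∈ body⁻(r)` is a head of `G`. Its minimal model is therefore determined by
`R = MP` of those rules of `P`: it consists of rules (1) and (2) for `r ∈ R`, rules (3) for
`p ∈ T(r,R)`, and the instances of rule (4) whose bodies hold in `R`. For a generating set `G`,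
`inc` is never derived, since every rule with head `inc` has `not inc` in its body. So no
instance of rule (4) fires, which says that `R` defeats none of its own rules; and the tagged
heads of `G` are the `head(T(r,R))^r`, so the rules kept in (2) form the GNO reduct of `P` by `R`.
-/

section MinimalSets

variable {P Q R : Set (Rule A)}

lemma posSat_self (P : Set (Rule A)) : PosSat P P := ⟨subset_rfl, fun _ hr _ => hr⟩

lemma MP_subset_of_posSat (h : PosSat P R) : MP P ⊆ R := Set.sInter_subset_of_mem h

lemma MP_subset (P : Set (Rule A)) : MP P ⊆ P := MP_subset_of_posSat (posSat_self P)

lemma headSet_mono (h : R ⊆ Q) : headSet R ⊆ headSet Q := Set.image_mono h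

lemma head_mem_headSet {r : Rule A} (h : r ∈ R) : r.head ∈ headSet R := ⟨r, h, rfl⟩

lemma mem_MP_of_pos_subset {r : Rule A} (hr : r ∈ P) (h : r.pos ⊆ headSet (MP P)) :
    r ∈ MP P :=
  Set.mem_sInter.2 fun _ hX => hX.2 r hr (h.trans (headSet_mono (MP_subset_of_posSat hX)))

@[elab_as_elim]
lemma MP_induction {C : Rule A → Prop}
    (h : ∀ r ∈ P, r.pos ⊆ headSet {q ∈ MP P | C q} → C r) {r : Rule A} (hr : r ∈ MP P) :
    C r := by
  have hsat : PosSat P {q ∈ MP P | C q} :=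
    ⟨fun q hq => MP_subset P hq.1, fun r hr hpos =>
      ⟨mem_MP_of_pos_subset hr (hpos.trans (headSet_mono (Set.sep_subset _ _))), h r hr hpos⟩⟩
  exact (MP_subset_of_posSat hsat hr).2

lemma pos_subset_headSet_MP {r : Rule A} (hr : r ∈ MP P) : r.pos ⊆ headSet (MP P) :=
  MP_induction (fun _ _ hpos => hpos.trans (headSet_mono (Set.sep_subset _ _))) hr

lemma MP_mono (h : P ⊆ Q) : MP P ⊆ MP Q :=
  fun _ hr => MP_induction (fun _ hr hpos =>
    mem_MP_of_pos_subset (h hr) (hpos.trans (headSet_mono fun _ hq => hq.2))) hr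

lemma MP_eq_of_subset_of_subset (hR : R = MP P) (hRQ : R ⊆ Q) (hQP : Q ⊆ P) : MP Q = R := by
  refine ((MP_mono hQP).trans hR.ge).antisymm fun r hr => ?_
  rw [hR] at hr
  refine MP_induction (fun r hr hpos => ?_) hr
  have hrR : r ∈ R :=
    hR ▸ mem_MP_of_pos_subset hr (hpos.trans (headSet_mono (Set.sep_subset _ _)))
  exact mem_MP_of_pos_subset (hRQ hrR) (hpos.trans (headSet_mono fun _ hq => hq.2))

end MinimalSets

section GeneratingSets

variable {P R : Set (Rule A)}

lemma mem_reduct_iff {q : Rule A} :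
    q ∈ reduct P R ↔ q ∈ P ∧ ∀ l ∈ q.neg, l ∉ headSet R := by
  simp only [reduct, defeatsRule, Set.inter_nonempty, not_exists, not_and]
  exact and_congr_right fun _ => forall_congr' fun l => imp_not_comm

lemma GenSet.eq_gamma (h : GenSet P R) : R = Gamma (headSet R) P := by
  obtain ⟨-, hR⟩ := h
  ext r
  constructor
  · intro hr
    have hred : r ∈ reduct P R := MP_subset _ (hR ▸ hr)
    refine ⟨hred.1, hR ▸ pos_subset_headSet_MP (hR ▸ hr), ?_⟩
    rw [Set.inter_comm]
    exact Set.not_nonempty_iff_eq_empty.1 hred.2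
  · rintro ⟨hrP, hpos, hneg⟩
    have hred : r ∈ reduct P R :=
      ⟨hrP, by rw [defeatsRule, Set.inter_comm, hneg]; exact Set.not_nonempty_empty⟩
    exact hR ▸ mem_MP_of_pos_subset hred (hR ▸ hpos)

lemma reduct_subset_gnoReduct (lt : Rule A → Rule A → Prop) : reduct P R ⊆ gnoReduct lt P R :=
  fun r hr => ⟨hr.1, fun hT => hr.2 <| by
    rw [defeatsRule, Set.inter_comm]
    exact hT.mono (Set.inter_subset_inter_right _
      (headSet_mono ((MP_subset _).trans (Set.sep_subset _ _))))⟩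

end GeneratingSets

section Transformation

def headRule (r : Rule A) : Rule (TAtom A) := ⟨embedLit r.head, {nLit r}, ∅⟩

def nameRule (r : Rule A) : Rule (TAtom A) :=
  ⟨nLit r, embedLit '' r.pos, (fun x => tagLit x r) '' r.neg⟩

def tagRule (p r : Rule A) : Rule (TAtom A) :=
  ⟨tagLit p.head r, (fun y => tagLit y r) '' p.pos ∪ {nLit p}, ∅⟩

def incRule (r : Rule A) (x : Lit A) : Rule (TAtom A) :=
  ⟨incLit, {nLit r, embedLit x}, {incLit}⟩

variable {lt : Rule A → Rule A → Prop} {P R : Set (Rule A)}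

def transGen (lt : Rule A → Rule A → Prop) (P R : Set (Rule A)) : Set (Rule (TAtom A)) :=
  headRule '' R ∪ nameRule '' R ∪ {q | ∃ r ∈ P, ∃ p ∈ Trules lt r R, q = tagRule p r}

def transLits (lt : Rule A → Rule A → Prop) (P R : Set (Rule A)) : Set (Lit (TAtom A)) :=
  embedLit '' headSet R ∪ nLit '' R ∪
    {l | ∃ r ∈ P, ∃ x ∈ headSet (Trules lt r R), l = tagLit x r}

def incRules (R : Set (Rule A)) : Set (Rule (TAtom A)) :=
  {q | ∃ r ∈ R, ∃ x ∈ headSet R ∩ r.neg, q = incRule r x}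

def tagReduct (P : Set (Rule A)) (L : Set (Lit (TAtom A))) : Set (Rule A) :=
  {r ∈ P | ∀ x ∈ r.neg, tagLit x r ∉ L}

@[simp] lemma embedLit_mem_transLits {x : Lit A} :
    embedLit x ∈ transLits lt P R ↔ x ∈ headSet R := by
  simp [transLits, embedLit, nLit, tagLit, Prod.ext_iff]

@[simp] lemma nLit_mem_transLits {r : Rule A} : nLit r ∈ transLits lt P R ↔ r ∈ R := by
  simp [transLits, embedLit, nLit, tagLit]

lemma tagLit_inj {x y : Lit A} {r p : Rule A} : tagLit x r = tagLit y p ↔ x = y ∧ r = p := by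
  simp [tagLit]

@[simp] lemma tagLit_mem_transLits {x : Lit A} {r : Rule A} :
    tagLit x r ∈ transLits lt P R ↔ r ∈ P ∧ x ∈ headSet (Trules lt r R) := by
  have hembed (y : Lit A) : embedLit y ≠ tagLit x r := by simp [embedLit, tagLit]
  have hname (p : Rule A) : nLit p ≠ tagLit x r := by simp [nLit, tagLit]
  simp only [transLits, Set.mem_union, Set.mem_image, hembed, and_false, exists_false, hname,
    false_or]
  constructor
  · rintro ⟨p, hp, y, hy, h⟩
    obtain ⟨rfl, rfl⟩ := tagLit_inj.1 h
    exact ⟨hp, hy⟩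
  · rintro ⟨hr, hx⟩
    exact ⟨r, hr, x, hx, rfl⟩

lemma embedLit_ne_incLit {x : Lit A} : embedLit x ≠ incLit := by simp [embedLit, incLit]

lemma nLit_ne_incLit {r : Rule A} : nLit r ≠ incLit := by simp [nLit, incLit]

lemma tagLit_ne_incLit {x : Lit A} {r : Rule A} : tagLit x r ≠ incLit := by simp [tagLit, incLit]

lemma incLit_notMem_transLits : incLit ∉ transLits lt P R := by
  simp [transLits, embedLit, nLit, tagLit, incLit]

lemma headSet_transGen : headSet (transGen lt P R) = transLits lt P R := by
  ext l
  simp only [headSet, transGen, transLits, Set.image_union, Set.image_image]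
  constructor
  · rintro ((⟨r, hr, rfl⟩ | ⟨r, hr, rfl⟩) | ⟨q, ⟨r, hr, p, hp, rfl⟩, rfl⟩)
    · exact Or.inl (Or.inl ⟨r, hr, rfl⟩)
    · exact Or.inl (Or.inr ⟨r, hr, rfl⟩)
    · exact Or.inr ⟨r, hr, p.head, ⟨p, hp, rfl⟩, rfl⟩
  · rintro ((⟨r, hr, rfl⟩ | ⟨r, hr, rfl⟩) | ⟨r, hr, _, ⟨p, hp, rfl⟩, rfl⟩)
    · exact Or.inl (Or.inl ⟨r, hr, rfl⟩)
    · exact Or.inl (Or.inr ⟨r, hr, rfl⟩)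
    · exact Or.inr ⟨tagRule p r, ⟨r, hr, p, hp, rfl⟩, rfl⟩

lemma transGen_subset_transProg (hRP : R ⊆ P) : transGen lt P R ⊆ transProg lt P := by
  rintro q ((⟨r, hr, rfl⟩ | ⟨r, hr, rfl⟩) | ⟨r, hr, p, hp, rfl⟩)
  · exact ⟨r, hRP hr, Or.inl rfl⟩
  · exact ⟨r, hRP hr, Or.inr (Or.inl rfl)⟩
  · obtain ⟨hpR, hlt⟩ := MP_subset _ hp
    exact ⟨r, hr, Or.inr (Or.inr (Or.inl ⟨p, hRP hpR, hlt, rfl⟩))⟩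

lemma tagReduct_transLits : tagReduct P (transLits lt P R) = gnoReduct lt P R := by
  ext r
  simp only [tagReduct, gnoReduct, tagLit_mem_transLits, Set.mem_ofPred_eq, Set.Nonempty,
    Set.mem_inter_iff, not_exists, not_and]
  exact and_congr_right fun hr => forall₂_congr fun x _ => by simp [hr]

lemma embedLit_preimage_transLits : embedLit ⁻¹' transLits lt P R = headSet R := by
  ext x
  exact embedLit_mem_transLits

lemma consistent_transLits_iff : Consistent (transLits lt P R) ↔ Consistent (headSet R) := by
  refine ⟨fun h a ha => h (TAtom.orig a) ?_, fun h a ha => ?_⟩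
  · exact ⟨embedLit_mem_transLits.2 ha.1, embedLit_mem_transLits.2 ha.2⟩
  · obtain ⟨b, -, hb⟩ : ∃ b, (false, b) ∈ headSet R ∧ TAtom.orig b = a := by
      simpa [transLits, embedLit, nLit, tagLit] using ha.2
    subst hb
    exact h b ⟨embedLit_mem_transLits.1 ha.1, embedLit_mem_transLits.1 ha.2⟩

lemma GenSet.transLits_eq (h : GenSet P R) :
    transLits lt P R =
      embedLit '' headSet R ∪ nameLits P (headSet R) ∪ auxLits lt P (headSet R) := by
  unfold nameLits auxLits
  rw [← h.eq_gamma]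
  rfl

end Transformation

section ReductOfTransProg

variable {lt : Rule A → Rule A → Prop} {P : Set (Rule A)} {G : Set (Rule (TAtom A))}
  {p r : Rule A} {x : Lit A}

lemma headRule_mem_reduct (hr : r ∈ P) : headRule r ∈ reduct (transProg lt P) G :=
  mem_reduct_iff.2 ⟨⟨r, hr, Or.inl rfl⟩, fun _ h => h.elim⟩

lemma nameRule_mem_reduct (hr : r ∈ tagReduct P (headSet G)) :
    nameRule r ∈ reduct (transProg lt P) G :=
  mem_reduct_iff.2 ⟨⟨r, hr.1, Or.inr (Or.inl rfl)⟩, by rintro _ ⟨x, hx, rfl⟩; exact hr.2 x hx⟩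

lemma tagRule_mem_reduct (hr : r ∈ P) (hp : p ∈ P) (hlt : ¬ lt p r) :
    tagRule p r ∈ reduct (transProg lt P) G :=
  mem_reduct_iff.2 ⟨⟨r, hr, Or.inr (Or.inr (Or.inl ⟨p, hp, hlt, rfl⟩))⟩, fun _ h => h.elim⟩

lemma incRule_mem_reduct (hr : r ∈ P) (hx : x ∈ r.neg) (hinc : incLit ∉ headSet G) :
    incRule r x ∈ reduct (transProg lt P) G :=
  mem_reduct_iff.2 ⟨⟨r, hr, Or.inr (Or.inr (Or.inr ⟨x, hx, rfl⟩))⟩, by rintro _ rfl; exact hinc⟩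

lemma headRule_and_nameRule_mem_MP_reduct
    (hr : r ∈ MP (tagReduct P (headSet G))) :
    headRule r ∈ MP (reduct (transProg lt P) G) ∧ nameRule r ∈ MP (reduct (transProg lt P) G) := by
  refine MP_induction (fun r hr hpos => ?_) hr
  have hname : nameRule r ∈ MP (reduct (transProg lt P) G) := by
    refine mem_MP_of_pos_subset (nameRule_mem_reduct hr) ?_
    rintro _ ⟨y, hy, rfl⟩
    obtain ⟨q, hq, rfl⟩ := hpos hy
    exact ⟨headRule q, hq.2.1, rfl⟩
  refine ⟨mem_MP_of_pos_subset (headRule_mem_reduct hr.1) ?_, hname⟩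
  rintro _ rfl
  exact head_mem_headSet hname

lemma tagRule_mem_MP_reduct (hr : r ∈ P)
    (hp : p ∈ Trules lt r (MP (tagReduct P (headSet G)))) :
    tagRule p r ∈ MP (reduct (transProg lt P) G) := by
  refine MP_induction (fun p hp hpos => ?_) hp
  refine mem_MP_of_pos_subset (tagRule_mem_reduct hr (MP_subset _ hp.1).1 hp.2) ?_
  rintro _ (⟨y, hy, rfl⟩ | rfl)
  · obtain ⟨q, hq, rfl⟩ := hpos hy
    exact ⟨tagRule q r, hq.2, rfl⟩
  · exact ⟨nameRule p, (headRule_and_nameRule_mem_MP_reduct hp.1).2, rfl⟩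

lemma incRule_mem_MP_reduct (hinc : incLit ∉ headSet G)
    (hr : r ∈ MP (tagReduct P (headSet G)))
    (hx : x ∈ headSet (MP (tagReduct P (headSet G))) ∩ r.neg) :
    incRule r x ∈ MP (reduct (transProg lt P) G) := by
  refine mem_MP_of_pos_subset (incRule_mem_reduct (MP_subset _ hr).1 hx.2 hinc) ?_
  rintro _ (rfl | rfl)
  · exact ⟨nameRule r, (headRule_and_nameRule_mem_MP_reduct hr).2, rfl⟩
  · obtain ⟨q, hq, rfl⟩ := hx.1
    exact ⟨headRule q, (headRule_and_nameRule_mem_MP_reduct hq).1, rfl⟩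

lemma transGen_union_incRules_subset_MP_reduct (hinc : incLit ∉ headSet G) :
    transGen lt P (MP (tagReduct P (headSet G))) ∪ incRules (MP (tagReduct P (headSet G))) ⊆
      MP (reduct (transProg lt P) G) := by
  rintro q (((⟨r, hr, rfl⟩ | ⟨r, hr, rfl⟩) | ⟨r, hr, p, hp, rfl⟩) | ⟨r, hr, x, hx, rfl⟩)
  · exact (headRule_and_nameRule_mem_MP_reduct hr).1
  · exact (headRule_and_nameRule_mem_MP_reduct hr).2
  · exact tagRule_mem_MP_reduct hr hp
  · exact incRule_mem_MP_reduct hinc hr hx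

lemma MP_reduct_subset_transGen_union_incRules :
    MP (reduct (transProg lt P) G) ⊆
      transGen lt P (MP (tagReduct P (headSet G))) ∪ incRules (MP (tagReduct P (headSet G))) := by
  set R := MP (tagReduct P (headSet G))
  intro q hq
  refine MP_induction (fun q hq hpos => ?_) hq
  have hbody : q.pos ⊆ insert incLit (transLits lt P R) := by
    refine hpos.trans ((headSet_mono fun _ h => h.2).trans ?_)
    rw [headSet, Set.image_union, ← headSet, headSet_transGen]
    rintro _ (hl | ⟨_, ⟨r, -, x, -, rfl⟩, rfl⟩)
    exacts [Or.inr hl, Or.inl rfl]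
  have hname {r : Rule A} (h : nLit r ∈ q.pos) : r ∈ R :=
    nLit_mem_transLits.1 (Set.mem_of_mem_insert_of_ne (hbody h) nLit_ne_incLit)
  obtain ⟨hqQ, hqneg⟩ := mem_reduct_iff.1 hq
  obtain ⟨r, hrP, rfl | rfl | ⟨p, hpP, hlt, rfl⟩ | ⟨x, hx, rfl⟩⟩ := hqQ
  · exact Or.inl (Or.inl (Or.inl ⟨r, hname rfl, rfl⟩))
  · have hr : r ∈ tagReduct P (headSet G) := ⟨hrP, fun x hx => hqneg _ ⟨x, hx, rfl⟩⟩
    refine Or.inl (Or.inl (Or.inr ⟨r, mem_MP_of_pos_subset hr fun y hy => ?_, rfl⟩))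
    exact embedLit_mem_transLits.1
      (Set.mem_of_mem_insert_of_ne (hbody ⟨y, hy, rfl⟩) embedLit_ne_incLit)
  · have hp : p ∈ {p ∈ R | ¬ lt p r} := ⟨hname (Or.inr rfl), hlt⟩
    refine Or.inl (Or.inr ⟨r, hrP, p, mem_MP_of_pos_subset hp fun y hy => ?_, rfl⟩)
    exact (tagLit_mem_transLits.1
      (Set.mem_of_mem_insert_of_ne (hbody (Or.inl ⟨y, hy, rfl⟩)) tagLit_ne_incLit)).2
  · have hx' : x ∈ headSet R := embedLit_mem_transLits.1
      (Set.mem_of_mem_insert_of_ne (hbody (Or.inr rfl)) embedLit_ne_incLit)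
    exact Or.inr ⟨r, hname (Or.inl rfl), x, ⟨hx', hx⟩, rfl⟩

theorem MP_reduct_transProg (hinc : incLit ∉ headSet G) :
    MP (reduct (transProg lt P) G) =
      transGen lt P (MP (tagReduct P (headSet G))) ∪ incRules (MP (tagReduct P (headSet G))) :=
  MP_reduct_subset_transGen_union_incRules.antisymm
    (transGen_union_incRules_subset_MP_reduct hinc)

end ReductOfTransProg

section GeneratingSetsOfTransProg

variable {lt : Rule A → Rule A → Prop} {P R : Set (Rule A)}

lemma incLit_notMem_headSet {G : Set (Rule (TAtom A))} (hGQ : G ⊆ transProg lt P)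
    (hG : G ⊆ reduct (transProg lt P) G) : incLit ∉ headSet G := by
  rintro ⟨q, hq, hh⟩
  obtain ⟨r, -, rfl | rfl | ⟨p, -, -, rfl⟩ | ⟨x, -, rfl⟩⟩ := hGQ hq
  · exact embedLit_ne_incLit hh
  · exact nLit_ne_incLit hh
  · exact tagLit_ne_incLit hh
  · exact (mem_reduct_iff.1 (hG hq)).2 incLit rfl ⟨_, hq, hh⟩

lemma incRules_eq_empty_iff : incRules R = ∅ ↔ ∀ r ∈ R, ¬ defeatsRule R r := by
  rw [Set.eq_empty_iff_forall_notMem]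
  constructor
  · rintro h r hr ⟨x, hx⟩
    exact h _ ⟨r, hr, x, hx, rfl⟩
  · rintro h _ ⟨r, hr, x, hx, rfl⟩
    exact h r hr ⟨x, hx⟩

theorem genSet_transProg_iff {G : Set (Rule (TAtom A))} :
    GenSet (transProg lt P) G ↔ ∃ R, GNOPrefGen lt P R ∧ G = transGen lt P R := by
  constructor
  · rintro ⟨hGQ, hG⟩
    have hinc : incLit ∉ headSet G := incLit_notMem_headSet hGQ fun q hq => MP_subset _ (hG ▸ hq)
    set R := MP (tagReduct P (headSet G))
    have hGR : G = transGen lt P R ∪ incRules R := hG.trans (MP_reduct_transProg hinc)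
    have hRdef : ∀ r ∈ R, ¬ defeatsRule R r := by
      refine incRules_eq_empty_iff.1 (Set.eq_empty_of_forall_notMem fun q hq =>
        hinc ⟨q, hGR ▸ Or.inr hq, ?_⟩)
      obtain ⟨r, -, x, -, rfl⟩ := hq
      rfl
    rw [incRules_eq_empty_iff.2 hRdef, Set.union_empty] at hGR
    have hgno : R = MP (gnoReduct lt P R) := by
      rw [← tagReduct_transLits, ← headSet_transGen, ← hGR]
    have hRP : R ⊆ P := (MP_subset _).trans (Set.sep_subset _ _)
    have hRred : R ⊆ reduct P R := fun r hr => ⟨hRP hr, hRdef r hr⟩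
    have hgen : R = MP (reduct P R) :=
      (MP_eq_of_subset_of_subset hgno hRred (reduct_subset_gnoReduct lt)).symm
    exact ⟨R, ⟨⟨hRP, hgen⟩, hgno⟩, hGR⟩
  · rintro ⟨R, ⟨hgen, hgno⟩, rfl⟩
    have hinc : incLit ∉ headSet (transGen lt P R) := headSet_transGen ▸ incLit_notMem_transLits
    have hRdef : ∀ r ∈ R, ¬ defeatsRule R r := fun r hr => (MP_subset _ (hgen.2 ▸ hr)).2
    refine ⟨transGen_subset_transProg hgen.1, ?_⟩
    rw [MP_reduct_transProg hinc, headSet_transGen, tagReduct_transLits, ← hgno,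
      incRules_eq_empty_iff.2 hRdef, Set.union_empty]

end GeneratingSetsOfTransProg

theorem trans_captures_gno_general (P : Set (Rule A))
    (lt : Rule A → Rule A → Prop) :
    (∀ S : Set (Lit A), GNOPrefAnswerSet lt P S →
      AnswerSet (transProg lt P) (embedLit '' S ∪ nameLits P S ∪ auxLits lt P S)) ∧
    (∀ A' : Set (Lit (TAtom A)), AnswerSet (transProg lt P) A' →
      GNOPrefAnswerSet lt P (embedLit ⁻¹' A') ∧
      A' = embedLit '' (embedLit ⁻¹' A') ∪ nameLits P (embedLit ⁻¹' A') ∪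
        auxLits lt P (embedLit ⁻¹' A')) := by
  refine ⟨?_, ?_⟩
  · rintro S ⟨hcons, R, hR, rfl⟩
    rw [← hR.1.transLits_eq]
    refine ⟨consistent_transLits_iff.2 hcons, transGen lt P R, ?_, headSet_transGen⟩
    exact genSet_transProg_iff.2 ⟨R, hR, rfl⟩
  · rintro A' ⟨hcons, G, hG, rfl⟩
    obtain ⟨R, hR, rfl⟩ := genSet_transProg_iff.1 hG
    rw [headSet_transGen] at hcons ⊢
    rw [embedLit_preimage_transLits]
    exact ⟨⟨consistent_transLits_iff.1 hcons, R, hR, rfl⟩, hR.1.transLits_eq⟩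

/-- the transformation `t` captures semantics GNO: GNO-preferred
answer sets of `(P,<)` correspond exactly (modulo the new literals) to answer
sets of `t(P,<)`. -/
theorem trans_captures_gno (P : Set (Rule A)) (hP : P.Finite)
    (lt : Rule A → Rule A → Prop) (htrans : Transitive lt)
    (hasymm : ∀ r₁ r₂, lt r₁ r₂ → ¬ lt r₂ r₁) :
    (∀ S : Set (Lit A), GNOPrefAnswerSet lt P S →
      AnswerSet (transProg lt P) (embedLit '' S ∪ nameLits P S ∪ auxLits lt P S)) ∧
    (∀ A' : Set (Lit (TAtom A)), AnswerSet (transProg lt P) A' →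
      GNOPrefAnswerSet lt P (embedLit ⁻¹' A') ∧
      A' = embedLit '' (embedLit ⁻¹' A') ∪ nameLits P (embedLit ⁻¹' A') ∪
        auxLits lt P (embedLit ⁻¹' A')) :=
  trans_captures_gno_general P lt
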